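/- Let r ∈ ℂ, p = e^{ℓ} with ℓ > 0, v₀ ∈ ℂ*, and suppose φ is holomorphic on a neighbourhood of (0,∞) in ℂ and satisfies p^{1-r/2} φ(pt) = v₀ φ(t). Assume moreover that φ admits asymptotic power-series expansions: φ(t) ∼ ∑_{m ≥ k} c_m t^m as t → 0⁺ and t^{r-2} φ(-1/t) ∼ ∑_{m ≥ k} d_m t^m as t → 0⁺, for some k ∈ ℤ. If φ ≠ 0 then r ∈ ℤ and there is an integer κ with k ≤ κ ≤ r - 2 - k such that e^{κℓ} = v₀ e^{(r/2-1)ℓ}, and φ(t) is a constant multiple of t^κ. -/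

import Mathlib

/-!
Comparing the expansions at `0` of `f (p x)` and `μ f x` gives `p ^ m e_m = μ e_m`, so at most one
coefficient `e_κ`, the one with `p ^ κ = μ`, is nonzero. A function that is `O(x ^ N)` for every `N`
and scales by `μ` vanishes, since `‖f x‖ ≤ ‖μ‖ ^ n C (x / p ^ n) ^ N → 0` once `p ^ N > ‖μ‖`;
applied to `f - e_κ x ^ κ` this gives `φ = c_κ t ^ κ` on `(0, ∞)`, hence on all nonzero reals by
analytic continuation. Then `t ^ (r - 2) φ (-1/t)` is a multiple of `t ^ (r - 2 - κ)`, and the same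
argument at `0` (with the scaling `t ↦ 2t`) forces `r - 2 - κ` to be an integer `≥ k`.
-/

open Complex Asymptotics Filter Topology

def HasAsymptoticExpansionAtZero (f : ℝ → ℂ) (k : ℤ) (e : ℤ → ℂ) : Prop :=
  ∀ N : ℤ, k ≤ N →
    (fun x : ℝ => f x - ∑ m ∈ Finset.Icc k (N - 1), e m * (x : ℂ) ^ m) =O[𝓝[>] 0]
      fun x => x ^ N

theorem isBigO_ofReal_zpow (l : Filter ℝ) (m : ℤ) :
    (fun x : ℝ => (x : ℂ) ^ m) =O[l] fun x => x ^ m :=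
  isBigO_of_le l fun x => by simp [norm_zpow]

theorem isBigO_zpow_zpow_nhdsGT_zero {m n : ℤ} (h : m ≤ n) :
    (fun x : ℝ => x ^ n) =O[𝓝[>] 0] fun x => x ^ m := by
  refine IsBigO.of_bound 1 ?_
  filter_upwards [Ioo_mem_nhdsGT (zero_lt_one' ℝ)] with x hx
  rw [one_mul, Real.norm_of_nonneg (zpow_pos hx.1 n).le,
    Real.norm_of_nonneg (zpow_pos hx.1 m).le]
  exact zpow_le_zpow_right_of_le_one₀ hx.1 hx.2.le h

theorem eq_zero_of_isBigO_zpow_add_one {a : ℂ} {m : ℤ}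
    (h : (fun x : ℝ => a * (x : ℂ) ^ m) =O[𝓝[>] 0] fun x => x ^ (m + 1)) : a = 0 := by
  obtain ⟨C, hC⟩ := h.bound
  have hle : ∀ᶠ x in 𝓝[>] (0 : ℝ), ‖a‖ ≤ C * x := by
    filter_upwards [hC, self_mem_nhdsWithin] with x hx (hx0 : 0 < x)
    rw [norm_mul, norm_zpow, norm_real, norm_zpow, Real.norm_of_nonneg hx0.le,
      zpow_add_one₀ hx0.ne', ← mul_assoc, mul_comm C] at hx
    exact le_of_mul_le_mul_right (by linarith) (zpow_pos hx0 m)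
  have hlim : Tendsto (fun x : ℝ => C * x) (𝓝[>] 0) (𝓝 0) := by
    simpa using ((continuous_const_mul C).tendsto 0).mono_left nhdsWithin_le_nhds
  exact norm_le_zero_iff.mp (ge_of_tendsto hlim hle)

theorem eq_zero_of_isBigO_sum_zpow {k : ℤ} {e : ℤ → ℂ}
    (h : ∀ N : ℤ, k ≤ N →
      (fun x : ℝ => ∑ m ∈ Finset.Icc k (N - 1), e m * (x : ℂ) ^ m) =O[𝓝[>] 0] fun x => x ^ N) :
    ∀ m, k ≤ m → e m = 0 := by
  by_contra! hne
  obtain ⟨m₀, ⟨hkm₀, hm₀⟩, hleast⟩ :=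
    Int.exists_least_of_bdd (P := fun m => k ≤ m ∧ e m ≠ 0) ⟨k, fun _ h => h.1⟩ hne
  refine hm₀ <| eq_zero_of_isBigO_zpow_add_one <|
    (h (m₀ + 1) (by omega)).congr_left fun x => ?_
  refine Finset.sum_eq_single_of_mem m₀ (by simp [hkm₀]) fun m hm hmm₀ => ?_
  rw [Finset.mem_Icc] at hm
  have : e m = 0 := by_contra fun hem => by have := hleast m ⟨hm.1, hem⟩; omega
  rw [this, zero_mul]

namespace HasAsymptoticExpansionAtZero

variable {f g : ℝ → ℂ} {k : ℤ} {e e' : ℤ → ℂ}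

theorem of_bound
    (h : ∀ N : ℤ, k ≤ N → ∃ C δ : ℝ, 0 < δ ∧ ∀ x : ℝ, 0 < x → x < δ →
      ‖f x - ∑ m ∈ Finset.Icc k (N - 1), e m * (x : ℂ) ^ m‖ ≤ C * x ^ N) :
    HasAsymptoticExpansionAtZero f k e := by
  intro N hN
  obtain ⟨C, δ, hδ, hB⟩ := h N hN
  refine IsBigO.of_bound C ?_
  filter_upwards [Ioo_mem_nhdsGT hδ] with x hx
  rw [Real.norm_of_nonneg (zpow_pos hx.1 N).le]
  exact hB x hx.1 hx.2

theorem congr (h : HasAsymptoticExpansionAtZero f k e) (hfg : ∀ x, 0 < x → f x = g x) :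
    HasAsymptoticExpansionAtZero g k e := fun N hN =>
  (h N hN).congr' (eventually_nhdsWithin_of_forall fun x hx => by simp only [hfg x hx]) .rfl

theorem congr_coeff (h : HasAsymptoticExpansionAtZero f k e) (he : ∀ m, k ≤ m → e m = e' m) :
    HasAsymptoticExpansionAtZero f k e' := fun N hN =>
  (h N hN).congr_left fun x => by
    rw [Finset.sum_congr rfl fun m hm => by rw [he m (Finset.mem_Icc.mp hm).1]]

theorem unique (h : HasAsymptoticExpansionAtZero f k e)
    (h' : HasAsymptoticExpansionAtZero f k e') : ∀ m, k ≤ m → e m = e' m := by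
  have := eq_zero_of_isBigO_sum_zpow (e := e - e') fun N hN =>
    ((h' N hN).sub (h N hN)).congr_left fun x => by
      simp only [Pi.sub_apply, sub_mul, Finset.sum_sub_distrib]; ring
  exact fun m hm => sub_eq_zero.mp (this m hm)

theorem sub (h : HasAsymptoticExpansionAtZero f k e) (h' : HasAsymptoticExpansionAtZero g k e') :
    HasAsymptoticExpansionAtZero (f - g) k (e - e') := fun N hN =>
  ((h N hN).sub (h' N hN)).congr_left fun x => by
    simp only [Pi.sub_apply, sub_mul, Finset.sum_sub_distrib]; ring

theorem const_mul (h : HasAsymptoticExpansionAtZero f k e) (μ : ℂ) :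
    HasAsymptoticExpansionAtZero (fun x => μ * f x) k (fun m => μ * e m) := fun N hN =>
  ((h N hN).const_mul_left μ).congr_left fun x => by
    simp only [mul_sub, Finset.mul_sum, mul_assoc]

theorem comp_mul_left (h : HasAsymptoticExpansionAtZero f k e) {p : ℝ} (hp : 0 < p) :
    HasAsymptoticExpansionAtZero (fun x => f (p * x)) k (fun m => (p : ℂ) ^ m * e m) := by
  intro N hN
  have hp_tendsto : Tendsto (p * ·) (𝓝[>] 0) (𝓝[>] 0) := by
    simpa only [comap_mulLeft_nhdsGT_zero hp] using tendsto_comap (f := (p * ·)) (x := 𝓝[>] 0)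
  refine (((h N hN).comp_tendsto hp_tendsto).congr_left fun x => ?_).trans ?_
  · simp only [Function.comp_apply, ofReal_mul, mul_zpow]
    congr 1
    exact Finset.sum_congr rfl fun m _ => by ring
  · exact ((isBigO_refl _ _).const_mul_left (p ^ N)).congr_left fun x => (mul_zpow p x N).symm

end HasAsymptoticExpansionAtZero

theorem hasAsymptoticExpansionAtZero_monomial (a : ℂ) {k κ : ℤ} (hκ : k ≤ κ) :
    HasAsymptoticExpansionAtZero (fun x => a * (x : ℂ) ^ κ) k (Pi.single κ a) := by
  intro N hN
  by_cases hNκ : N ≤ κ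
  · have hsum :
        ∀ x : ℝ, ∑ m ∈ Finset.Icc k (N - 1), (Pi.single κ a : ℤ → ℂ) m * (x : ℂ) ^ m = 0 :=
      fun x => Finset.sum_eq_zero fun m hm => by
        rw [Pi.single_apply, if_neg (by rw [Finset.mem_Icc] at hm; omega), zero_mul]
    simp only [hsum, sub_zero]
    exact ((isBigO_ofReal_zpow _ κ).const_mul_left a).trans (isBigO_zpow_zpow_nhdsGT_zero hNκ)
  · have hsum : ∀ x : ℝ, ∑ m ∈ Finset.Icc k (N - 1), (Pi.single κ a : ℤ → ℂ) m * (x : ℂ) ^ m =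
        a * (x : ℂ) ^ κ := fun x => by
      rw [Finset.sum_eq_single_of_mem κ (by rw [Finset.mem_Icc]; omega)
        fun m _ hm => by rw [Pi.single_eq_of_ne hm, zero_mul], Pi.single_eq_same]
    simp only [hsum, sub_self]
    exact isBigO_zero _ _

section Scaling

variable {f : ℝ → ℂ} {k : ℤ} {e : ℤ → ℂ} {p : ℝ} {μ : ℂ}

theorem HasAsymptoticExpansionAtZero.zpow_mul_coeff_eq_of_scaling
    (h : HasAsymptoticExpansionAtZero f k e) (hp : 0 < p) (hsc : ∀ x, 0 < x → f (p * x) = μ * f x) :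
    ∀ m, k ≤ m → (p : ℂ) ^ m * e m = μ * e m :=
  ((h.comp_mul_left hp).congr hsc).unique (h.const_mul μ)

theorem HasAsymptoticExpansionAtZero.eq_zero_of_scaling (h : HasAsymptoticExpansionAtZero f k 0)
    (hp : 1 < p) (hsc : ∀ x, 0 < x → f (p * x) = μ * f x) :
    ∀ x, 0 < x → f x = 0 := by
  intro x hx
  have hp0 : 0 < p := zero_lt_one.trans hp
  obtain ⟨n₀, hn₀⟩ := pow_unbounded_of_one_lt ‖μ‖ hp
  set N : ℤ := max k n₀
  have hμN : ‖μ‖ < p ^ N := hn₀.trans_le <| by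
    rw [← zpow_natCast]; exact zpow_le_zpow_right₀ hp.le (le_max_right _ _)
  have hO : f =O[𝓝[>] 0] fun x => x ^ N := by simpa using h N (le_max_left _ _)
  obtain ⟨C, hC⟩ := hO.bound
  have hiter : ∀ n : ℕ, f x = μ ^ n * f (x / p ^ n) := by
    intro n
    induction n with
    | zero => simp
    | succ n ih =>
      rw [ih, show x / p ^ n = p * (x / p ^ (n + 1)) by field_simp; ring, hsc _ (by positivity)]
      ring
  have hlim : Tendsto (fun n : ℕ => x / p ^ n) atTop (𝓝[>] 0) :=
    tendsto_nhdsWithin_iff.mpr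
      ⟨tendsto_const_nhds.div_atTop (tendsto_pow_atTop_atTop_of_one_lt hp),
        .of_forall fun n => Set.mem_Ioi.mpr (by positivity)⟩
  have hbound : ∀ᶠ n : ℕ in atTop, ‖f x‖ ≤ C * x ^ N * (‖μ‖ / p ^ N) ^ n := by
    filter_upwards [hlim.eventually hC] with n hn
    have hpow : (x / p ^ n) ^ N = x ^ N / (p ^ N) ^ n := by
      rw [div_zpow, ← zpow_natCast, ← zpow_natCast, ← zpow_mul, ← zpow_mul, mul_comm]
    rw [Real.norm_of_nonneg (by positivity), hpow] at hn
    calc ‖f x‖ = ‖μ‖ ^ n * ‖f (x / p ^ n)‖ := by rw [hiter n, norm_mul, norm_pow]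
      _ ≤ ‖μ‖ ^ n * (C * (x ^ N / (p ^ N) ^ n)) := by gcongr
      _ = C * x ^ N * (‖μ‖ / p ^ N) ^ n := by rw [div_pow]; field_simp
  have hρ : Tendsto (fun n : ℕ => C * x ^ N * (‖μ‖ / p ^ N) ^ n) atTop (𝓝 0) := by
    simpa using (tendsto_pow_atTop_nhds_zero_of_lt_one (by positivity)
      ((div_lt_one (by positivity)).mpr hμN)).const_mul (C * x ^ N)
  exact norm_le_zero_iff.mp (ge_of_tendsto hρ hbound)

theorem HasAsymptoticExpansionAtZero.eq_zero_or_eq_monomial_of_scaling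
    (h : HasAsymptoticExpansionAtZero f k e) (hp : 1 < p)
    (hsc : ∀ x, 0 < x → f (p * x) = μ * f x) :
    (∀ x, 0 < x → f x = 0) ∨
      ∃ κ, k ≤ κ ∧ e κ ≠ 0 ∧ μ = (p : ℂ) ^ κ ∧ ∀ x, 0 < x → f x = e κ * (x : ℂ) ^ κ := by
  have hp0 : 0 < p := zero_lt_one.trans hp
  have hrel := h.zpow_mul_coeff_eq_of_scaling hp0 hsc
  by_cases he : ∀ m, k ≤ m → e m = 0
  · exact .inl ((h.congr_coeff he).eq_zero_of_scaling hp hsc)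
  push Not at he
  obtain ⟨κ, hκ, heκ⟩ := he
  have hμ : μ = (p : ℂ) ^ κ := (mul_right_cancel₀ heκ (hrel κ hκ)).symm
  have hsupp : ∀ m, k ≤ m → (e - Pi.single κ (e κ) : ℤ → ℂ) m = (0 : ℤ → ℂ) m := by
    intro m hm
    rcases eq_or_ne m κ with rfl | hmκ
    · simp
    have hpm : (p : ℂ) ^ m ≠ (p : ℂ) ^ κ := by
      rw [← ofReal_zpow, ← ofReal_zpow, Ne, ofReal_inj]
      exact (zpow_right_injective₀ hp0 hp.ne').ne hmκ
    have hem : e m = 0 := by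
      by_contra hem
      exact hpm (hμ ▸ mul_right_cancel₀ hem (hrel m hm))
    simp [hem, Pi.single_eq_of_ne hmκ]
  let g : ℝ → ℂ := fun x => f x - e κ * (x : ℂ) ^ κ
  have hg : HasAsymptoticExpansionAtZero g k 0 :=
    (h.sub (hasAsymptoticExpansionAtZero_monomial (e κ) hκ)).congr_coeff hsupp
  have hgsc : ∀ x, 0 < x → g (p * x) = μ * g x := by
    intro x hx
    simp only [g, hsc x hx, hμ, ofReal_mul, mul_zpow]
    ring
  refine .inr ⟨κ, hκ, heκ, hμ, fun x hx => sub_eq_zero.mp ?_⟩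
  exact hg.eq_zero_of_scaling hp hgsc x hx

end Scaling

theorem eq_mul_zpow_of_eq_mul_zpow_on_pos {U : Set ℂ} (hU : IsOpen U)
    (hconn : IsPreconnected U)
    (hUreal : ∀ x : ℝ, x ≠ 0 → (x : ℂ) ∈ U) {φ : ℂ → ℂ} (hφ : DifferentiableOn ℂ φ U)
    {a : ℂ} {κ : ℤ} (h : ∀ x : ℝ, 0 < x → φ x = a * (x : ℂ) ^ κ) :
    ∀ x : ℝ, x ≠ 0 → φ x = a * (x : ℂ) ^ κ := by
  -- clearing the pole of `z ^ κ` at `0` turns both sides into functions analytic on `U`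
  have hpole : ∀ z : ℂ, z ≠ 0 → z ^ κ * z ^ (-κ).toNat = z ^ κ.toNat := fun z hz => by
    rw [← zpow_natCast, ← zpow_natCast, ← zpow_add₀ hz]; congr 1; omega
  have hF : AnalyticOnNhd ℂ (fun z => φ z * z ^ (-κ).toNat) U :=
    (hφ.analyticOnNhd hU).mul (analyticOnNhd_id.pow _)
  have hG : AnalyticOnNhd ℂ (fun z => a * z ^ κ.toNat) U :=
    analyticOnNhd_const.mul (analyticOnNhd_id.pow _)
  have hreal : Tendsto (fun x : ℝ => (x : ℂ)) (𝓝[>] 1) (𝓝[≠] 1) :=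
    tendsto_nhdsWithin_iff.mpr ⟨(continuous_ofReal.tendsto' 1 1 ofReal_one).mono_left
      nhdsWithin_le_nhds, eventually_nhdsWithin_of_forall fun x hx => by
        simpa using (Set.mem_Ioi.mp hx).ne'⟩
  have hfreq : ∃ᶠ z in 𝓝[≠] (1 : ℂ), φ z * z ^ (-κ).toNat = a * z ^ κ.toNat := by
    refine hreal.frequently (Eventually.frequently ?_)
    filter_upwards [eventually_nhdsWithin_of_forall fun x (hx : 1 < x) => hx] with x hx
    have hx0 : 0 < x := zero_lt_one.trans hx
    rw [h x hx0, mul_assoc, hpole _ (ofReal_ne_zero.mpr hx0.ne')]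
  have heq := hF.eqOn_of_preconnected_of_frequently_eq hG hconn (hUreal 1 one_ne_zero) hfreq
  intro x hx
  have hxC : (x : ℂ) ≠ 0 := ofReal_ne_zero.mpr hx
  refine mul_right_cancel₀ (pow_ne_zero (-κ).toNat hxC) ?_
  rw [mul_assoc, hpole _ hxC]
  exact heq (hUreal x hx)

theorem eq_zero_of_forall_ofReal_cpow_eq_one {u : ℂ} (h : ∀ x : ℝ, 0 < x → (x : ℂ) ^ u = 1) :
    u = 0 := by
  by_contra hu
  have hderiv := hasDerivAt_ofReal_cpow_const one_ne_zero hu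
  have hconst : (fun y : ℝ => (y : ℂ) ^ u) =ᶠ[𝓝 1] fun _ => 1 :=
    eventually_of_mem (Ioi_mem_nhds one_pos) h
  simpa [hu] using (hderiv.congr_of_eventuallyEq hconst.symm).unique (hasDerivAt_const 1 1)

theorem cpow_exponent_eq_of_forall_pos {A B s t : ℂ} (hA : A ≠ 0)
    (h : ∀ x : ℝ, 0 < x → A * (x : ℂ) ^ s = B * (x : ℂ) ^ t) : s = t := by
  have hAB : A = B := by simpa using h 1 one_pos
  refine sub_eq_zero.mp (eq_zero_of_forall_ofReal_cpow_eq_one fun x hx => ?_)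
  have hxC : (x : ℂ) ≠ 0 := ofReal_ne_zero.mpr hx.ne'
  rw [cpow_sub _ _ hxC, div_eq_one_iff_eq (cpow_ne_zero_iff.mpr (.inl hxC))]
  exact mul_left_cancel₀ hA (hAB ▸ h x hx)

theorem HasAsymptoticExpansionAtZero.exists_int_eq_of_cpow {A s : ℂ} {k : ℤ} {e : ℤ → ℂ}
    (hA : A ≠ 0) (h : HasAsymptoticExpansionAtZero (fun x => A * (x : ℂ) ^ s) k e) :
    ∃ l : ℤ, k ≤ l ∧ s = l := by
  have hsc : ∀ x : ℝ, 0 < x → A * ((2 * x : ℝ) : ℂ) ^ s = (2 : ℂ) ^ s * (A * (x : ℂ) ^ s) :=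
    fun x hx => by
      rw [ofReal_mul, mul_cpow_ofReal_nonneg zero_le_two hx.le, ofReal_ofNat]; ring
  rcases h.eq_zero_or_eq_monomial_of_scaling one_lt_two hsc with hzero | ⟨l, hkl, -, -, hl⟩
  · simpa [hA] using hzero 1 one_pos
  · exact ⟨l, hkl, cpow_exponent_eq_of_forall_pos hA fun x hx => by
      rw [hl x hx, ← cpow_intCast]⟩

theorem hyperbolic_invariant_classification_general
    (r : ℂ) (ℓ : ℝ) (hℓ : 0 < ℓ) (p : ℝ) (hp : p = Real.exp ℓ)
    (v₀ : ℂ) (k : ℤ) (c d : ℤ → ℂ)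
    (U : Set ℂ) (hU : IsOpen U) (hconn : IsConnected U)
    (hUreal : ∀ x : ℝ, x ≠ 0 → (x : ℂ) ∈ U)
    (φ : ℂ → ℂ) (hφ : DifferentiableOn ℂ φ U)
    (hscale : ∀ x : ℝ, x ≠ 0 →
        ((p : ℂ)) ^ ((1 : ℂ) - r / 2) * φ ((p * x : ℝ) : ℂ) = v₀ * φ (x : ℂ))
    (hexp0 : ∀ N : ℤ, k ≤ N → ∃ C δ : ℝ, 0 < δ ∧ ∀ x : ℝ, 0 < x → x < δ →
        ‖φ (x : ℂ) - ∑ m ∈ Finset.Icc k (N - 1), c m * (x : ℂ) ^ m‖ ≤ C * x ^ N)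
    (hexpinf : ∀ N : ℤ, k ≤ N → ∃ C δ : ℝ, 0 < δ ∧ ∀ x : ℝ, 0 < x → x < δ →
        ‖(x : ℂ) ^ (r - 2) * φ ((-1 / x : ℝ) : ℂ) -
            ∑ m ∈ Finset.Icc k (N - 1), d m * (x : ℂ) ^ m‖ ≤ C * x ^ N)
    (hne : ¬ ∀ x : ℝ, x ≠ 0 → φ (x : ℂ) = 0) :
    ∃ m : ℤ, r = (m : ℂ) ∧ ∃ κ : ℤ, k ≤ κ ∧ κ ≤ m - 2 - k ∧
      Complex.exp ((κ : ℂ) * (ℓ : ℂ)) = v₀ * Complex.exp ((r / 2 - 1) * (ℓ : ℂ)) ∧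
      ∃ a : ℂ, ∀ x : ℝ, x ≠ 0 → φ (x : ℂ) = a * (x : ℂ) ^ κ := by
  have hp1 : 1 < p := hp ▸ Real.one_lt_exp_iff.mpr hℓ
  have hpℓ : ∀ z : ℂ, (p : ℂ) ^ z = exp (z * ℓ) := fun z => by
    rw [cpow_def_of_ne_zero (ofReal_ne_zero.mpr (by positivity)), ← ofReal_log (by positivity),
      hp, Real.log_exp, mul_comm]
  have hsc : ∀ x : ℝ, 0 < x → φ ↑(p * x) = v₀ * exp ((r / 2 - 1) * ℓ) * φ x := fun x hx => by
    rw [mul_right_comm, ← hscale x hx.ne', hpℓ, mul_right_comm, ← exp_add]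
    ring_nf
    rw [exp_zero, one_mul]
  have hextend (a : ℂ) (κ : ℤ) :=
    eq_mul_zpow_of_eq_mul_zpow_on_pos hU hconn.isPreconnected hUreal hφ (a := a) (κ := κ)
  obtain hzero | ⟨κ, hkκ, hcκ, hμ, hmono⟩ :=
    (HasAsymptoticExpansionAtZero.of_bound hexp0).eq_zero_or_eq_monomial_of_scaling hp1 hsc
  · exact absurd (fun x hx => by simpa using hextend 0 0 (by simpa using hzero) x hx) hne
  have hinf : ∀ x : ℝ, 0 < x → (x : ℂ) ^ (r - 2) * φ ↑(-1 / x) =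
      c κ * (-1) ^ κ * (x : ℂ) ^ (r - 2 - κ) := fun x hx => by
    have hxC : (x : ℂ) ≠ 0 := ofReal_ne_zero.mpr hx.ne'
    rw [hextend _ _ hmono _ (by positivity), cpow_sub (r - 2) (κ : ℂ) hxC, cpow_intCast]
    push_cast
    rw [div_zpow]
    field_simp
  obtain ⟨l, hkl, hl⟩ := ((HasAsymptoticExpansionAtZero.of_bound hexpinf).congr
    hinf).exists_int_eq_of_cpow (mul_ne_zero hcκ (zpow_ne_zero κ (by norm_num)))
  refine ⟨κ + l + 2, by push_cast; linear_combination hl, κ, hkκ, by omega, ?_, c κ,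
    hextend _ _ hmono⟩
  rw [hμ, ← hpℓ, cpow_intCast]

/-- invariants of a hyperbolic scaling.  Suppose `φ` is holomorphic on a
connected neighbourhood `U` of `(0,∞)` (and `(-∞,0)`, needed for `φ(-1/t)` to make
sense) in ℂ, satisfies `p^(1-r/2) φ (p t) = v₀ φ t` with `p = e^ℓ`, `ℓ > 0`, and
admits asymptotic power series expansions `φ t ∼ ∑_{m ≥ k} c_m t^m` and
`t^(r-2) φ(-1/t) ∼ ∑_{m ≥ k} d_m t^m` as `t → 0⁺`.  If `φ ≠ 0` then `r ∈ ℤ` and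
there is an integer `κ` with `k ≤ κ ≤ r - 2 - k` such that
`e^(κℓ) = v₀ e^((r/2-1)ℓ)` and `φ` is a constant multiple of `t^κ`. -/
theorem hyperbolic_invariant_classification
    (r : ℂ) (ℓ : ℝ) (hℓ : 0 < ℓ) (p : ℝ) (hp : p = Real.exp ℓ)
    (v₀ : ℂ) (hv₀ : v₀ ≠ 0) (k : ℤ) (c d : ℤ → ℂ)
    (U : Set ℂ) (hU : IsOpen U) (hconn : IsConnected U)
    (hUreal : ∀ x : ℝ, x ≠ 0 → (x : ℂ) ∈ U)
    (φ : ℂ → ℂ) (hφ : DifferentiableOn ℂ φ U)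
    (hscale : ∀ x : ℝ, x ≠ 0 →
        ((p : ℂ)) ^ ((1 : ℂ) - r / 2) * φ ((p * x : ℝ) : ℂ) = v₀ * φ (x : ℂ))
    (hexp0 : ∀ N : ℤ, k ≤ N → ∃ C δ : ℝ, 0 < δ ∧ ∀ x : ℝ, 0 < x → x < δ →
        ‖φ (x : ℂ) - ∑ m ∈ Finset.Icc k (N - 1), c m * (x : ℂ) ^ m‖ ≤ C * x ^ N)
    (hexpinf : ∀ N : ℤ, k ≤ N → ∃ C δ : ℝ, 0 < δ ∧ ∀ x : ℝ, 0 < x → x < δ →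
        ‖(x : ℂ) ^ (r - 2) * φ ((-1 / x : ℝ) : ℂ) -
            ∑ m ∈ Finset.Icc k (N - 1), d m * (x : ℂ) ^ m‖ ≤ C * x ^ N)
    (hne : ¬ ∀ x : ℝ, x ≠ 0 → φ (x : ℂ) = 0) :
    ∃ m : ℤ, r = (m : ℂ) ∧ ∃ κ : ℤ, k ≤ κ ∧ κ ≤ m - 2 - k ∧
      Complex.exp ((κ : ℂ) * (ℓ : ℂ)) = v₀ * Complex.exp ((r / 2 - 1) * (ℓ : ℂ)) ∧
      ∃ a : ℂ, ∀ x : ℝ, x ≠ 0 → φ (x : ℂ) = a * (x : ℂ) ^ κ :=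
  hyperbolic_invariant_classification_general r ℓ hℓ p hp v₀ k c d U hU hconn hUreal φ hφ hscale
    hexp0 hexpinf hne
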